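/- arXiv:1712.04257 — 2 statements merged into one kernel-verified Lean document; each statement's English description precedes it below -/
import Mathlib

section
/- For symmetric positive definite n×n real matrices A and B, one has tr(A - ln A - I) - tr(B - ln B - I) ≤ tr((I - A⁻¹)(A - B)), i.e. the free energy E(C) = tr(C - ln C - I) is convex with gradient I - C⁻¹. -/
/-!
After cancelling `tr A - n` on both sides, the inequality says
`log det (A⁻¹ B) ≤ tr (A⁻¹ B) - n`. The matrix `A⁻¹ B` is similar to a positive definite matrix,
and for those `log det ≤ tr - n` is `log λ ≤ λ - 1` summed over the eigenvalues.
-/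

open Matrix

open scoped MatrixOrder

namespace Matrix

variable {ι : Type*} [Fintype ι] [DecidableEq ι]

theorem PosDef.log_det_le_trace_sub_card {M : Matrix ι ι ℝ} (hM : M.PosDef) :
    Real.log M.det ≤ M.trace - Fintype.card ι := by
  have hev := hM.eigenvalues_pos
  rw [hM.isHermitian.det_eq_prod_eigenvalues, hM.isHermitian.trace_eq_sum_eigenvalues]
  simp only [RCLike.ofReal_real_eq_id, id_eq]
  rw [Real.log_prod fun i _ => (hev i).ne', ← Finset.card_univ, Finset.card_eq_sum_ones,
    Nat.cast_sum, Nat.cast_one, ← Finset.sum_sub_distrib]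
  exact Finset.sum_le_sum fun i _ => Real.log_le_sub_one_of_pos (hev i)

/-- Writing `P = Sᴴ S`, the product `P Q` has the determinant and trace of the positive definite
matrix `S Q Sᴴ`. -/
theorem PosDef.log_det_mul_le_trace_mul_sub_card {P Q : Matrix ι ι ℝ} (hP : P.PosDef)
    (hQ : Q.PosDef) : Real.log (P * Q).det ≤ (P * Q).trace - Fintype.card ι := by
  obtain ⟨S, hS, rfl⟩ :=
    CStarAlgebra.isStrictlyPositive_iff_eq_star_mul_self.mp hP.isStrictlyPositive
  have hSQS : (S * Q * Sᴴ).PosDef :=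
    hQ.mul_mul_conjTranspose_same (vecMul_injective_iff_isUnit.mpr hS)
  rw [mul_assoc, det_mul_comm, trace_mul_comm, star_eq_conjTranspose]
  exact hSQS.log_det_le_trace_sub_card

end Matrix

theorem matrix_free_energy_convexity_ineq_general
    (n : ℕ) (A B : Matrix (Fin n) (Fin n) ℝ)
    (hApd : A.PosDef) (hBpd : B.PosDef) :
    (A.trace - Real.log A.det - n) - (B.trace - Real.log B.det - n)
      ≤ ((1 - A⁻¹) * (A - B)).trace := by
  have key := hApd.inv.log_det_mul_le_trace_mul_sub_card hBpd
  rw [det_mul, det_nonsing_inv, Ring.inverse_eq_inv',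
    Real.log_mul (inv_ne_zero hApd.det_pos.ne') hBpd.det_pos.ne', Real.log_inv,
    Fintype.card_fin] at key
  rw [sub_mul, mul_sub, mul_sub, one_mul, one_mul, nonsing_inv_mul A hApd.det_pos.ne'.isUnit,
    trace_sub, trace_sub, trace_sub, trace_one, Fintype.card_fin]
  linarith

/-- Convexity inequality for the matrix free energy `E(C) = tr(C - ln C - I)`:
for symmetric positive definite matrices `A, B`,
`E(A) - E(B) ≤ tr((I - A⁻¹)(A - B))`.  Here we use that for a symmetric
positive definite matrix `C`, `tr (ln C) = log (det C)`, so that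
`E(C) = tr C - log (det C) - n`. -/
theorem matrix_free_energy_convexity_ineq
    (n : ℕ) (A B : Matrix (Fin n) (Fin n) ℝ)
    (hAsymm : A.IsSymm) (hBsymm : B.IsSymm)
    (hApd : A.PosDef) (hBpd : B.PosDef) :
    (A.trace - Real.log A.det - n) - (B.trace - Real.log B.det - n)
      ≤ ((1 - A⁻¹) * (A - B)).trace :=
  matrix_free_energy_convexity_ineq_general n A B hApd hBpd
end

section
/- Subcharacteristic (Whitham) stability for the Suliciu relaxation of a barotropic pressure law: let P: (0,∞) → ℝ be C¹ with P' > 0 on an interval containing h₀ and h₁, and let e(1/h) be the specific internal energy with d e/d(1/h) = -P. If c² ≥ sup over h between h₀ and h₁ of h²P'(h), then e(h₁) - (P(h₁))²/(2c²) ≤ e(h₀) - (P(h₀))²/(2c²) - P(h₁)·(1/h₁ - 1/h₀ + (P(h₁) - P(h₀))/c²). -/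
/-!
The claim is `F(h₁) ≤ F(h₀)` for `F(h) = e(1/h) - P(h)²/(2c²) + P(h₁)(1/h + P(h)/c²)`, and
`F'(h) = (P(h) - P(h₁)) (1/h² - P'(h)/c²)`. The second factor is nonnegative by the
subcharacteristic condition, and the first changes sign only at `h₁` because `P` is increasing,
so on the interval between `h₀` and `h₁` the function `F` is smallest at `h₁`.
-/

open Set

theorem le_of_hasDerivAt_sub_mul_nonneg {F g w : ℝ → ℝ} {a b : ℝ}
    (hg : MonotoneOn g (uIcc a b)) (hw : ∀ x ∈ uIcc a b, 0 ≤ w x)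
    (hF : ∀ x ∈ uIcc a b, HasDerivAt F ((g x - g b) * w x) x) : F b ≤ F a := by
  have hcont : ContinuousOn F (uIcc a b) := fun x hx => (hF x hx).continuousAt.continuousWithinAt
  rcases le_total a b with hab | hba
  · simp only [uIcc_of_le hab] at hg hw hF hcont
    refine antitoneOn_of_hasDerivWithinAt_nonpos (convex_Icc a b) hcont
      (fun x hx => (hF x (interior_subset hx)).hasDerivWithinAt) (fun x hx => ?_)
      (left_mem_Icc.2 hab) (right_mem_Icc.2 hab) hab
    replace hx := interior_subset hx
    exact mul_nonpos_of_nonpos_of_nonneg (sub_nonpos.2 (hg hx (right_mem_Icc.2 hab) hx.2)) (hw x hx)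
  · simp only [uIcc_of_ge hba] at hg hw hF hcont
    refine monotoneOn_of_hasDerivWithinAt_nonneg (convex_Icc b a) hcont
      (fun x hx => (hF x (interior_subset hx)).hasDerivWithinAt) (fun x hx => ?_)
      (left_mem_Icc.2 hba) (right_mem_Icc.2 hba) hba
    replace hx := interior_subset hx
    exact mul_nonneg (sub_nonneg.2 (hg (left_mem_Icc.2 hba) hx hx.1)) (hw x hx)

noncomputable def stabilityPotential (P e : ℝ → ℝ) (c p h : ℝ) : ℝ :=
  e (1 / h) - P h ^ 2 / (2 * c ^ 2) + p * (1 / h + P h / c ^ 2)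

theorem hasDerivAt_stabilityPotential {P e : ℝ → ℝ} {c p h P' : ℝ} (hh : h ≠ 0)
    (hP : HasDerivAt P P' h) (he : HasDerivAt e (-P h) (1 / h)) :
    HasDerivAt (stabilityPotential P e c p) ((P h - p) * (1 / h ^ 2 - P' / c ^ 2)) h := by
  have hinv : HasDerivAt (fun x : ℝ => 1 / x) (-(h ^ 2)⁻¹) h := by
    simpa only [one_div] using hasDerivAt_inv hh
  have := ((he.comp h hinv).sub ((hP.pow 2).div_const (2 * c ^ 2))).add
    ((hinv.add (hP.div_const (c ^ 2))).const_mul p)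
  refine this.congr_deriv ?_
  field_simp
  ring

theorem subcharacteristic_stability_general
    (P e : ℝ → ℝ) (c : ℝ)
    (h₀ h₁ : ℝ) (hh₀ : 0 < h₀) (hh₁ : 0 < h₁)
    (hP : ∀ h ∈ Set.Ioi (0:ℝ), HasDerivAt P (deriv P h) h)
    (hP' : ∀ h ∈ Set.Ioi (0:ℝ), 0 < deriv P h)
    (he : ∀ v ∈ Set.Ioi (0:ℝ), HasDerivAt e (-(P (1 / v))) v)
    (hsub : ∀ h ∈ Set.uIcc h₀ h₁, h ^ 2 * deriv P h ≤ c ^ 2) :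
    e (1 / h₁) - (P h₁) ^ 2 / (2 * c ^ 2) ≤
      e (1 / h₀) - (P h₀) ^ 2 / (2 * c ^ 2)
        - P h₁ * (1 / h₁ - 1 / h₀ + (P h₁ - P h₀) / c ^ 2) := by
  have hpos : uIcc h₀ h₁ ⊆ Ioi 0 := ordConnected_Ioi.uIcc_subset hh₀ hh₁
  have hc : 0 < c ^ 2 :=
    (mul_pos (pow_pos hh₀ 2) (hP' h₀ hh₀)).trans_le (hsub h₀ left_mem_uIcc)
  have hPmono : MonotoneOn P (uIcc h₀ h₁) :=
    (strictMonoOn_of_deriv_pos (convex_Ioi 0)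
      (fun h hh => (hP h hh).continuousAt.continuousWithinAt)
      (by rwa [interior_Ioi])).monotoneOn.mono hpos
  have hgap : ∀ h ∈ uIcc h₀ h₁, 0 ≤ 1 / h ^ 2 - deriv P h / c ^ 2 := fun h hh => by
    rw [sub_nonneg, div_le_div_iff₀ hc (pow_pos (hpos hh) 2)]
    linarith [hsub h hh]
  have key := le_of_hasDerivAt_sub_mul_nonneg hPmono hgap fun h hh =>
    hasDerivAt_stabilityPotential (p := P h₁) (hpos hh).ne' (hP h (hpos hh))
      (by simpa only [one_div_one_div] using he (1 / h) (mem_Ioi.2 (one_div_pos.2 (hpos hh))))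
  unfold stabilityPotential at key
  linear_combination key

/-- Subcharacteristic (Whitham) stability for the Suliciu relaxation of a
barotropic pressure law: let `P` be `C¹` with `P' > 0` on `(0,∞)` and let
`e` (a function of the specific volume `v = 1/h`) satisfy `de/dv = -P(1/v)`.
If `c² ≥ h² P'(h)` for all `h` between `h₀` and `h₁`, then
`e(1/h₁) - P(h₁)²/(2c²) ≤ e(1/h₀) - P(h₀)²/(2c²)
  - P(h₁)(1/h₁ - 1/h₀ + (P(h₁) - P(h₀))/c²)`. -/
theorem subcharacteristic_stability
    (P e : ℝ → ℝ) (c : ℝ) (hc : 0 < c)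
    (h₀ h₁ : ℝ) (hh₀ : 0 < h₀) (hh₁ : 0 < h₁)
    (hP : ∀ h ∈ Set.Ioi (0:ℝ), HasDerivAt P (deriv P h) h)
    (hP' : ∀ h ∈ Set.Ioi (0:ℝ), 0 < deriv P h)
    (he : ∀ v ∈ Set.Ioi (0:ℝ), HasDerivAt e (-(P (1 / v))) v)
    (hsub : ∀ h ∈ Set.uIcc h₀ h₁, h ^ 2 * deriv P h ≤ c ^ 2) :
    e (1 / h₁) - (P h₁) ^ 2 / (2 * c ^ 2) ≤
      e (1 / h₀) - (P h₀) ^ 2 / (2 * c ^ 2)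
        - P h₁ * (1 / h₁ - 1 / h₀ + (P h₁ - P h₀) / c ^ 2) :=
  subcharacteristic_stability_general P e c h₀ h₁ hh₀ hh₁ hP hP' he hsub
end
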